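/- arXiv:2005.01345 — 9 statements merged into one kernel-verified Lean document; each statement's English description precedes it below -/
import Mathlib

section
/- Let d ∈ ℕ, let ξ : ℝ → ℝ^d be a function, and let (τ̃_z)_{z∈ℕ} be a sequence of times with τ̃_0 = 0 and 0 < h̲ ≤ τ̃_{z+1} − τ̃_z ≤ h̄ for all z ∈ ℕ. Let V_n : ℝ^d → ℝ be a continuous function with V_n(0) = 0 and V_n(ξ) > 0 for ξ ≠ 0, and suppose there are class K∞ functions α₁, α₂ and class K functions α₃, α₄ such that: (i) α₁(‖ξ‖) ≤ V_n(ξ) ≤ α₂(‖ξ‖) for all ξ ∈ ℝ^d; (ii) V_n(ξ(τ̃_z + r)) ≤ α₃(V_n(ξ(τ̃_z))) for all z ∈ ℕ and all 0 ≤ r < τ̃_{z+1} − τ̃_z; (iii) (V_n(ξ(τ̃_{z+1})) − V_n(ξ(τ̃_z)))/(τ̃_{z+1} − τ̃_z) ≤ −α₄(V_n(ξ(τ̃_z))) for all z ∈ ℕ. Then for every t ≥ 0 one has α₁(‖ξ(t)‖) ≤ α₃(α₂(‖ξ(0)‖)). In particular, for every β > 0 there is δ(β) > 0 such that ‖ξ(0)‖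 ≤ δ(β) implies ‖ξ(t)‖ ≤ β for all t ≥ 0. -/
/-!
Condition (iii) makes the samples `V(ξ(τ z))` nonincreasing, and every `t ≥ 0` lies in some
sampling interval `[τ z, τ (z+1))` because the gaps are at least `h̲ > 0`. Condition (ii) then
bounds `V(ξ t)` by `α₃ (V(ξ(τ z))) ≤ α₃ (V(ξ 0))`, and the sandwich (i) turns this into
`α₁ ‖ξ t‖ ≤ α₃ (α₂ ‖ξ 0‖)`. Stability follows since `α₃ ∘ α₂` is of class K, hence small near `0`.
-/

/-- A function is of class K if it is continuous, strictly increasing and vanishes at 0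
(all on the nonnegative half-line). -/
def IsClassK (α : ℝ → ℝ) : Prop :=
  ContinuousOn α (Set.Ici 0) ∧ StrictMonoOn α (Set.Ici 0) ∧ α 0 = 0

/-- A function is of class K∞ if it is of class K and unbounded. -/
def IsClassKInf (α : ℝ → ℝ) : Prop :=
  IsClassK α ∧ Filter.Tendsto α Filter.atTop Filter.atTop

open Filter Topology Set

namespace IsClassK

variable {α γ : ℝ → ℝ}

theorem monotoneOn (h : IsClassK α) : MonotoneOn α (Ici 0) :=
  h.2.1.monotoneOn

theorem nonneg (h : IsClassK α) {s : ℝ} (hs : 0 ≤ s) : 0 ≤ α s :=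
  h.2.2 ▸ h.monotoneOn self_mem_Ici hs hs

theorem pos (h : IsClassK α) {s : ℝ} (hs : 0 < s) : 0 < α s :=
  h.2.2 ▸ h.2.1 self_mem_Ici hs.le hs

theorem mapsTo (h : IsClassK α) : MapsTo α (Ici 0) (Ici 0) :=
  fun _ hs => h.nonneg hs

theorem comp (hγ : IsClassK γ) (hα : IsClassK α) : IsClassK (γ ∘ α) :=
  ⟨hγ.1.comp hα.1 hα.mapsTo, hγ.2.1.comp hα.2.1 hα.mapsTo, by simp [hα.2.2, hγ.2.2]⟩

theorem exists_pos_lt (h : IsClassK α) {ε : ℝ} (hε : 0 < ε) : ∃ δ, 0 < δ ∧ α δ < ε := by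
  have hlim : Tendsto α (𝓝[>] 0) (𝓝 0) := by
    have := h.1 0 self_mem_Ici
    rw [ContinuousWithinAt, h.2.2] at this
    exact this.mono_left (nhdsWithin_mono _ Ioi_subset_Ici_self)
  obtain ⟨δ, hδε, hδ⟩ := ((hlim.eventually (gt_mem_nhds hε)).and self_mem_nhdsWithin).exists
  exact ⟨δ, hδ, hδε⟩

end IsClassK

theorem exists_le_lt_succ_of_le_sub {τ : ℕ → ℝ} {h t : ℝ} (hh : 0 < h)
    (hgap : ∀ z, h ≤ τ (z + 1) - τ z) (ht : τ 0 ≤ t) : ∃ z, τ z ≤ t ∧ t < τ (z + 1) := by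
  have hlin : ∀ n : ℕ, τ 0 + n * h ≤ τ n := by
    intro n
    induction n with
    | zero => simp
    | succ n ih => push_cast; linarith [hgap n]
  by_contra! hstuck
  have hall : ∀ n, τ n ≤ t := fun n => Nat.rec ht (fun z hz => hstuck z hz) n
  obtain ⟨n, hn⟩ := exists_nat_gt ((t - τ 0) / h)
  rw [div_lt_iff₀ hh] at hn
  linarith [hall n, hlin n]

theorem antitone_of_div_sub_nonpos {v τ : ℕ → ℝ} (hτ : ∀ z, τ z < τ (z + 1))
    (h : ∀ z, (v (z + 1) - v z) / (τ (z + 1) - τ z) ≤ 0) : Antitone v :=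
  antitone_nat_of_succ_le fun z => by
    have := (div_le_iff₀ (sub_pos.2 (hτ z))).1 (h z)
    linarith

theorem le_of_antitone_samples {W : ℝ → ℝ} {τ : ℕ → ℝ} {γ : ℝ → ℝ} {h t : ℝ}
    (hγ : MonotoneOn γ (Ici 0)) (hW : ∀ s, 0 ≤ W s) (hτ0 : τ 0 = 0) (hh : 0 < h)
    (hgap : ∀ z, h ≤ τ (z + 1) - τ z) (hanti : Antitone fun z => W (τ z))
    (hinter : ∀ z r, 0 ≤ r → r < τ (z + 1) - τ z → W (τ z + r) ≤ γ (W (τ z)))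
    (ht : 0 ≤ t) : W t ≤ γ (W 0) := by
  obtain ⟨z, hzt, htz⟩ := exists_le_lt_succ_of_le_sub hh hgap (hτ0 ▸ ht)
  calc W t = W (τ z + (t - τ z)) := by rw [add_sub_cancel]
    _ ≤ γ (W (τ z)) := hinter z _ (sub_nonneg.2 hzt) (by linarith)
    _ ≤ γ (W (τ 0)) := hγ (hW _) (hW _) (hanti (Nat.zero_le z))
    _ = γ (W 0) := by rw [hτ0]

theorem exists_pos_norm_le_of_classK_bound {E : Type*} [SeminormedAddGroup E] {x : ℝ → E}
    {α γ : ℝ → ℝ} (hα : IsClassK α) (hγ : IsClassK γ)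
    (hx : ∀ t, 0 ≤ t → α ‖x t‖ ≤ γ ‖x 0‖) {β : ℝ} (hβ : 0 < β) :
    ∃ δ, 0 < δ ∧ (‖x 0‖ ≤ δ → ∀ t, 0 ≤ t → ‖x t‖ ≤ β) := by
  obtain ⟨δ, hδ, hδβ⟩ := hγ.exists_pos_lt (hα.pos hβ)
  refine ⟨δ, hδ, fun hx0 t ht => ?_⟩
  have hlt : α ‖x t‖ < α β :=
    calc α ‖x t‖ ≤ γ ‖x 0‖ := hx t ht
      _ ≤ γ δ := hγ.monotoneOn (norm_nonneg _) hδ.le hx0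
      _ < α β := hδβ
  exact ((hα.2.1.lt_iff_lt (norm_nonneg _) hβ.le).1 hlt).le

theorem stmt_0_general (d : ℕ) (ξ : ℝ → EuclideanSpace ℝ (Fin d))
    (τ : ℕ → ℝ) (hlow hbar : ℝ) (hτ0 : τ 0 = 0) (hhlow : 0 < hlow)
    (hgap : ∀ z : ℕ, hlow ≤ τ (z + 1) - τ z ∧ τ (z + 1) - τ z ≤ hbar)
    (Vn : EuclideanSpace ℝ (Fin d) → ℝ)
    (α₁ α₂ α₃ α₄ : ℝ → ℝ)
    (hα₁ : IsClassKInf α₁) (hα₂ : IsClassKInf α₂)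
    (hα₃ : IsClassK α₃) (hα₄ : IsClassK α₄)
    (hbound : ∀ x, α₁ ‖x‖ ≤ Vn x ∧ Vn x ≤ α₂ ‖x‖)
    (hii : ∀ z : ℕ, ∀ r : ℝ, 0 ≤ r → r < τ (z + 1) - τ z →
      Vn (ξ (τ z + r)) ≤ α₃ (Vn (ξ (τ z))))
    (hiii : ∀ z : ℕ,
      (Vn (ξ (τ (z + 1))) - Vn (ξ (τ z))) / (τ (z + 1) - τ z) ≤ -α₄ (Vn (ξ (τ z)))) :
    (∀ t : ℝ, 0 ≤ t → α₁ ‖ξ t‖ ≤ α₃ (α₂ ‖ξ 0‖)) ∧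
    (∀ β : ℝ, 0 < β → ∃ δ : ℝ, 0 < δ ∧
      (‖ξ 0‖ ≤ δ → ∀ t : ℝ, 0 ≤ t → ‖ξ t‖ ≤ β)) := by
  have hVnn : ∀ x, 0 ≤ Vn x := fun x => (hα₁.1.nonneg (norm_nonneg x)).trans (hbound x).1
  have hanti : Antitone fun z => Vn (ξ (τ z)) :=
    antitone_of_div_sub_nonpos (fun z => sub_pos.1 (hhlow.trans_le (hgap z).1))
      fun z => (hiii z).trans (neg_nonpos.2 (hα₄.nonneg (hVnn _)))
  have hbound_t : ∀ t, 0 ≤ t → α₁ ‖ξ t‖ ≤ α₃ (α₂ ‖ξ 0‖) := fun t ht =>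
    calc α₁ ‖ξ t‖ ≤ Vn (ξ t) := (hbound _).1
      _ ≤ α₃ (Vn (ξ 0)) :=
        le_of_antitone_samples (W := fun s => Vn (ξ s)) hα₃.monotoneOn (fun _ => hVnn _) hτ0
          hhlow (fun z => (hgap z).1) hanti hii ht
      _ ≤ α₃ (α₂ ‖ξ 0‖) := hα₃.monotoneOn (hVnn _) (hα₂.1.nonneg (norm_nonneg _)) (hbound _).2
  exact ⟨hbound_t, fun β hβ =>
    exists_pos_norm_le_of_classK_bound hα₁.1 (hα₃.comp hα₂.1) hbound_t hβ⟩

/-- Lyapunov stability part of Proposition 1. -/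
theorem stmt_0 (d : ℕ) (ξ : ℝ → EuclideanSpace ℝ (Fin d))
    (τ : ℕ → ℝ) (hlow hbar : ℝ) (hτ0 : τ 0 = 0) (hhlow : 0 < hlow)
    (hgap : ∀ z : ℕ, hlow ≤ τ (z + 1) - τ z ∧ τ (z + 1) - τ z ≤ hbar)
    (Vn : EuclideanSpace ℝ (Fin d) → ℝ) (hVcont : Continuous Vn)
    (hV0 : Vn 0 = 0) (hVpos : ∀ x, x ≠ 0 → 0 < Vn x)
    (α₁ α₂ α₃ α₄ : ℝ → ℝ)
    (hα₁ : IsClassKInf α₁) (hα₂ : IsClassKInf α₂)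
    (hα₃ : IsClassK α₃) (hα₄ : IsClassK α₄)
    (hbound : ∀ x, α₁ ‖x‖ ≤ Vn x ∧ Vn x ≤ α₂ ‖x‖)
    (hii : ∀ z : ℕ, ∀ r : ℝ, 0 ≤ r → r < τ (z + 1) - τ z →
      Vn (ξ (τ z + r)) ≤ α₃ (Vn (ξ (τ z))))
    (hiii : ∀ z : ℕ,
      (Vn (ξ (τ (z + 1))) - Vn (ξ (τ z))) / (τ (z + 1) - τ z) ≤ -α₄ (Vn (ξ (τ z)))) :
    (∀ t : ℝ, 0 ≤ t → α₁ ‖ξ t‖ ≤ α₃ (α₂ ‖ξ 0‖)) ∧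
    (∀ β : ℝ, 0 < β → ∃ δ : ℝ, 0 < δ ∧
      (‖ξ 0‖ ≤ δ → ∀ t : ℝ, 0 ≤ t → ‖ξ t‖ ≤ β)) :=
  stmt_0_general d ξ τ hlow hbar hτ0 hhlow hgap Vn α₁ α₂ α₃ α₄ hα₁ hα₂ hα₃ hα₄ hbound hii hiii
end

section
/- Let ψ : ℕ → ℝ be a sequence with ψ_z ≥ 0 for all z, let τ : ℕ → ℝ satisfy τ_0 = 0 and τ_{z+1} − τ_z ≥ h̲ > 0 for all z, and let α₄ : [0,∞) → [0,∞) be monotone increasing with α₄(0) = 0. Suppose (ψ_{z+1} − ψ_z)/(τ_{z+1} − τ_z) ≤ −α₄(ψ_z) for all z ∈ ℕ. Then (a) ψ is non-increasing, so ψ_z ≤ ψ_0 for all z, and (b) α₄(ψ_z) ≤ ψ_0/((z+1)·h̲) for all z ∈ ℕ; in particular α₄(ψ_z) → 0 as z → ∞. -/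
/-!
Since the steps of `τ` are at least `hlow`, the hypothesis gives the one-step descent
`ψ (z + 1) ≤ ψ z - hlow * α₄ (ψ z)`, so `ψ` is non-increasing and hence so is `α₄ ∘ ψ`.
Summing the descent over the first `z + 1` steps and bounding every `α₄ (ψ i)` from below by
the last one gives `(z + 1) * hlow * α₄ (ψ z) ≤ ψ 0 - ψ (z + 1) ≤ ψ 0`.
-/

open Filter Topology

lemma le_sub_mul_of_div_le_neg {x y d h a : ℝ} (hh : 0 < h) (hd : h ≤ d) (ha : 0 ≤ a)
    (hdiv : (y - x) / d ≤ -a) : y ≤ x - h * a := by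
  have hd_pos : 0 < d := hh.trans_le hd
  have hstep : y - x ≤ -a * d := (div_le_iff₀ hd_pos).mp hdiv
  nlinarith [mul_le_mul_of_nonneg_left hd ha]

section Descent

variable {u a : ℕ → ℝ} {h : ℝ}

lemma antitone_of_le_sub_mul (hh : 0 ≤ h) (ha : ∀ n, 0 ≤ a n)
    (hu : ∀ n, u (n + 1) ≤ u n - h * a n) : Antitone u :=
  antitone_nat_of_succ_le fun n => (hu n).trans (sub_le_self _ (mul_nonneg hh (ha n)))

lemma le_sub_succ_mul_of_le_sub_mul (hh : 0 ≤ h) (ha : Antitone a)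
    (hu : ∀ n, u (n + 1) ≤ u n - h * a n) (n : ℕ) :
    u (n + 1) ≤ u 0 - (n + 1) * h * a n := by
  induction n with
  | zero => simpa using hu 0
  | succ n ih =>
    have ha_succ : h * a (n + 1) ≤ h * a n := mul_le_mul_of_nonneg_left (ha n.le_succ) hh
    push_cast
    nlinarith [hu (n + 1), mul_le_mul_of_nonneg_left ha_succ (n.cast_nonneg : (0 : ℝ) ≤ n)]

lemma le_div_succ_mul_of_le_sub_mul (hh : 0 < h) (ha : Antitone a) (hu_nonneg : ∀ n, 0 ≤ u n)
    (hu : ∀ n, u (n + 1) ≤ u n - h * a n) (n : ℕ) :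
    a n ≤ u 0 / ((n + 1) * h) := by
  rw [le_div_iff₀ (by positivity)]
  nlinarith [le_sub_succ_mul_of_le_sub_mul hh.le ha hu n, hu_nonneg (n + 1)]

end Descent

lemma tendsto_const_div_succ_mul_atTop (c : ℝ) {h : ℝ} (hh : 0 < h) :
    Tendsto (fun n : ℕ => c / ((n + 1 : ℝ) * h)) atTop (𝓝 0) :=
  tendsto_const_nhds.div_atTop
    ((tendsto_natCast_atTop_atTop.atTop_add tendsto_const_nhds).atTop_mul_const hh)

theorem stmt_2_general (ψ : ℕ → ℝ) (τ : ℕ → ℝ) (hlow : ℝ) (α₄ : ℝ → ℝ)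
    (hψ : ∀ z : ℕ, 0 ≤ ψ z)
    (hhlow : 0 < hlow)
    (hgap : ∀ z : ℕ, hlow ≤ τ (z + 1) - τ z)
    (hα₄mono : MonotoneOn α₄ (Set.Ici 0))
    (hα₄nn : ∀ s : ℝ, 0 ≤ s → 0 ≤ α₄ s)
    (hdec : ∀ z : ℕ, (ψ (z + 1) - ψ z) / (τ (z + 1) - τ z) ≤ -α₄ (ψ z)) :
    (Antitone ψ ∧ ∀ z : ℕ, ψ z ≤ ψ 0) ∧
    ((∀ z : ℕ, α₄ (ψ z) ≤ ψ 0 / ((z + 1 : ℝ) * hlow)) ∧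
      Filter.Tendsto (fun z : ℕ => α₄ (ψ z)) Filter.atTop (nhds 0)) := by
  have hα₄ψ_nonneg : ∀ z, 0 ≤ α₄ (ψ z) := fun z => hα₄nn _ (hψ z)
  have hdescent : ∀ z, ψ (z + 1) ≤ ψ z - hlow * α₄ (ψ z) := fun z =>
    le_sub_mul_of_div_le_neg hhlow (hgap z) (hα₄ψ_nonneg z) (hdec z)
  have hψ_anti : Antitone ψ := antitone_of_le_sub_mul hhlow.le hα₄ψ_nonneg hdescent
  have hα₄ψ_anti : Antitone fun z => α₄ (ψ z) := fun i j hij =>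
    hα₄mono (hψ j) (hψ i) (hψ_anti hij)
  have hbound : ∀ z : ℕ, α₄ (ψ z) ≤ ψ 0 / ((z + 1 : ℝ) * hlow) :=
    le_div_succ_mul_of_le_sub_mul hhlow hα₄ψ_anti hψ hdescent
  exact ⟨⟨hψ_anti, fun z => hψ_anti z.zero_le⟩, hbound,
    squeeze_zero hα₄ψ_nonneg hbound (tendsto_const_div_succ_mul_atTop _ hhlow)⟩

/-- The discrete recursion from the proof of Proposition 1. -/
theorem stmt_2 (ψ : ℕ → ℝ) (τ : ℕ → ℝ) (hlow : ℝ) (α₄ : ℝ → ℝ)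
    (hψ : ∀ z : ℕ, 0 ≤ ψ z)
    (hτ0 : τ 0 = 0) (hhlow : 0 < hlow)
    (hgap : ∀ z : ℕ, hlow ≤ τ (z + 1) - τ z)
    (hα₄mono : MonotoneOn α₄ (Set.Ici 0)) (hα₄0 : α₄ 0 = 0)
    (hα₄nn : ∀ s : ℝ, 0 ≤ s → 0 ≤ α₄ s)
    (hdec : ∀ z : ℕ, (ψ (z + 1) - ψ z) / (τ (z + 1) - τ z) ≤ -α₄ (ψ z)) :
    (Antitone ψ ∧ ∀ z : ℕ, ψ z ≤ ψ 0) ∧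
    ((∀ z : ℕ, α₄ (ψ z) ≤ ψ 0 / ((z + 1 : ℝ) * hlow)) ∧
      Filter.Tendsto (fun z : ℕ => α₄ (ψ z)) Filter.atTop (nhds 0)) :=
  stmt_2_general ψ τ hlow α₄ hψ hhlow hgap hα₄mono hα₄nn hdec
end

section
/- For all real numbers ε, L, Λ and all real γ > 0, p > 0, v ≥ 0, W ≥ 0, h ≥ 0, the inequality −ε·v − h² + γ²·W² + 2γ·p·W·(L·W + h) − γ·W²·(2Λ·p + γ·(p² + 1)) ≤ max(−ε, 2(L − Λ))·(v + γ·p·W²) holds. -/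
theorem mul_add_mul_le_max_mul_add {R : Type*} [Semiring R] [LinearOrder R] [IsOrderedRing R]
    (a b : R) {x y : R} (hx : 0 ≤ x) (hy : 0 ≤ y) :
    a * x + b * y ≤ max a b * (x + y) := by
  rw [mul_add]
  exact add_le_add (mul_le_mul_of_nonneg_right (le_max_left a b) hx)
    (mul_le_mul_of_nonneg_right (le_max_right a b) hy)

theorem stmt_3_general (ε L Λ γ p v W h : ℝ)
    (hγ : 0 < γ) (hp : 0 < p) (hv : 0 ≤ v) :
    -ε * v - h ^ 2 + γ ^ 2 * W ^ 2 + 2 * γ * p * W * (L * W + h)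
      - γ * W ^ 2 * (2 * Λ * p + γ * (p ^ 2 + 1))
      ≤ max (-ε) (2 * (L - Λ)) * (v + γ * p * W ^ 2) := by
  calc -ε * v - h ^ 2 + γ ^ 2 * W ^ 2 + 2 * γ * p * W * (L * W + h)
        - γ * W ^ 2 * (2 * Λ * p + γ * (p ^ 2 + 1))
      = -ε * v + 2 * (L - Λ) * (γ * p * W ^ 2) - (h - γ * p * W) ^ 2 := by ring
    _ ≤ -ε * v + 2 * (L - Λ) * (γ * p * W ^ 2) := sub_le_self _ (sq_nonneg _)
    _ ≤ max (-ε) (2 * (L - Λ)) * (v + γ * p * W ^ 2) :=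
      mul_add_mul_le_max_mul_add _ _ hv (by positivity)

/-- The algebraic core of the proof of Proposition 2. -/
theorem stmt_3 (ε L Λ γ p v W h : ℝ)
    (hγ : 0 < γ) (hp : 0 < p) (hv : 0 ≤ v) (hW : 0 ≤ W) (hh : 0 ≤ h) :
    -ε * v - h ^ 2 + γ ^ 2 * W ^ 2 + 2 * γ * p * W * (L * W + h)
      - γ * W ^ 2 * (2 * Λ * p + γ * (p ^ 2 + 1))
      ≤ max (-ε) (2 * (L - Λ)) * (v + γ * p * W ^ 2) :=
  stmt_3_general ε L Λ γ p v W h hγ hp hv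
end

section
/- Let ε ∈ ℝ, γ > 0, Λ > 0, L ∈ ℝ, and let a < b be real numbers. Let v, ω, p : ℝ → ℝ be differentiable on [a,b] and h : ℝ → ℝ with h(t) ≥ 0 on [a,b]. Suppose for all t ∈ [a,b]: v(t) ≥ 0, ω(t) ≥ 0, p(t) > 0, v'(t) ≤ −ε·v(t) − h(t)² + γ²·ω(t), ω'(t) ≤ 2·√(ω(t))·(L·√(ω(t)) + h(t)), and p'(t) = −2Λ·p(t) − γ·(p(t)² + 1). Define U(t) := v(t) + γ·p(t)·ω(t) and c := max(−ε, 2(L − Λ)). Then U(t) ≤ exp(c·(t − a))·U(a) for all t ∈ [a,b]. -/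
/-!
With `c = max (-ε) (2 (L - Λ))` the function `U = v + γ p ω` satisfies `U' ≤ c U`: inserting the
three differential inequalities, the `γ² ω` terms cancel thanks to the Riccati equation for `p`, and
what remains is `-ε v + 2 (L - Λ) γ p ω - (h - γ p √ω)²`. Grönwall's inequality then gives
`U t ≤ exp (c (t - a)) U a`.
-/

open Set Real

theorem le_exp_mul_of_hasDerivWithinAt_le_mul {f f' : ℝ → ℝ} {K a b : ℝ}
    (hf : ∀ x ∈ Icc a b, HasDerivWithinAt f (f' x) (Icc a b) x)
    (bound : ∀ x ∈ Icc a b, f' x ≤ K * f x) :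
    ∀ x ∈ Icc a b, f x ≤ exp (K * (x - a)) * f a := by
  intro x hx
  have hright : ∀ y ∈ Ico a b, HasDerivWithinAt f (f' y) (Ici y) y := fun y hy =>
    (hf y (Ico_subset_Icc_self hy)).mono_of_mem_nhdsWithin
      (Filter.mem_of_superset (Icc_mem_nhdsGE hy.2) (Icc_subset_Icc_left hy.1))
  have := le_gronwallBound_of_liminf_deriv_right_le (δ := f a) (ε := 0)
    (fun y hy => (hf y hy).continuousWithinAt)
    (fun y hy _ hr => (hright y hy).liminf_right_slope_le hr) le_rfl
    (fun y hy => by simpa using bound y (Ico_subset_Icc_self hy)) x hx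
  rwa [gronwallBound_ε0, mul_comm] at this

theorem lyapunov_deriv_le_max_mul {ε L Λ γ v ω p h v' ω' p' : ℝ} (hγ : 0 ≤ γ)
    (hv : 0 ≤ v) (hω : 0 ≤ ω) (hp : 0 ≤ p)
    (hv' : v' ≤ -ε * v - h ^ 2 + γ ^ 2 * ω) (hω' : ω' ≤ 2 * √ω * (L * √ω + h))
    (hp' : p' = -2 * Λ * p - γ * (p ^ 2 + 1)) :
    v' + (γ * p' * ω + γ * p * ω') ≤ max (-ε) (2 * (L - Λ)) * (v + γ * p * ω) := by
  have hγp : 0 ≤ γ * p := mul_nonneg hγ hp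
  calc v' + (γ * p' * ω + γ * p * ω')
      ≤ (-ε * v - h ^ 2 + γ ^ 2 * ω) + (γ * p' * ω + γ * p * (2 * √ω * (L * √ω + h))) := by
        gcongr
    _ = -ε * v + 2 * (L - Λ) * (γ * p * ω) - (h - γ * p * √ω) ^ 2 := by
        rw [hp']
        linear_combination ((γ * p) ^ 2 + 2 * L * (γ * p)) * sq_sqrt hω
    _ ≤ -ε * v + 2 * (L - Λ) * (γ * p * ω) := sub_le_self _ (sq_nonneg _)
    _ ≤ max (-ε) (2 * (L - Λ)) * v + max (-ε) (2 * (L - Λ)) * (γ * p * ω) := by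
        gcongr
        exacts [le_max_left _ _, le_max_right _ _]
    _ = max (-ε) (2 * (L - Λ)) * (v + γ * p * ω) := by ring

theorem stmt_4_general (ε L Λ γ a b : ℝ) (hγ : 0 < γ)
    (v ω p h v' ω' p' : ℝ → ℝ)
    (hvderiv : ∀ t ∈ Set.Icc a b, HasDerivWithinAt v (v' t) (Set.Icc a b) t)
    (hωderiv : ∀ t ∈ Set.Icc a b, HasDerivWithinAt ω (ω' t) (Set.Icc a b) t)
    (hpderiv : ∀ t ∈ Set.Icc a b, HasDerivWithinAt p (p' t) (Set.Icc a b) t)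
    (hvnn : ∀ t ∈ Set.Icc a b, 0 ≤ v t)
    (hωnn : ∀ t ∈ Set.Icc a b, 0 ≤ ω t)
    (hppos : ∀ t ∈ Set.Icc a b, 0 < p t)
    (hv' : ∀ t ∈ Set.Icc a b, v' t ≤ -ε * v t - (h t) ^ 2 + γ ^ 2 * ω t)
    (hω' : ∀ t ∈ Set.Icc a b,
      ω' t ≤ 2 * Real.sqrt (ω t) * (L * Real.sqrt (ω t) + h t))
    (hp' : ∀ t ∈ Set.Icc a b, p' t = -2 * Λ * p t - γ * (p t ^ 2 + 1)) :
    ∀ t ∈ Set.Icc a b,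
      v t + γ * p t * ω t ≤
        Real.exp (max (-ε) (2 * (L - Λ)) * (t - a)) * (v a + γ * p a * ω a) :=
  le_exp_mul_of_hasDerivWithinAt_le_mul
    (fun t ht => (hvderiv t ht).add (((hpderiv t ht).const_mul γ).mul (hωderiv t ht)))
    (fun t ht => lyapunov_deriv_le_max_mul hγ.le (hvnn t ht) (hωnn t ht) (hppos t ht).le
      (hv' t ht) (hω' t ht) (hp' t ht))

/-- The central differential inequality from the proof of Proposition 2. -/
theorem stmt_4 (ε L Λ γ a b : ℝ) (hγ : 0 < γ) (hΛ : 0 < Λ) (hab : a < b)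
    (v ω p h v' ω' p' : ℝ → ℝ)
    (hvderiv : ∀ t ∈ Set.Icc a b, HasDerivWithinAt v (v' t) (Set.Icc a b) t)
    (hωderiv : ∀ t ∈ Set.Icc a b, HasDerivWithinAt ω (ω' t) (Set.Icc a b) t)
    (hpderiv : ∀ t ∈ Set.Icc a b, HasDerivWithinAt p (p' t) (Set.Icc a b) t)
    (hhnn : ∀ t ∈ Set.Icc a b, 0 ≤ h t)
    (hvnn : ∀ t ∈ Set.Icc a b, 0 ≤ v t)
    (hωnn : ∀ t ∈ Set.Icc a b, 0 ≤ ω t)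
    (hppos : ∀ t ∈ Set.Icc a b, 0 < p t)
    (hv' : ∀ t ∈ Set.Icc a b, v' t ≤ -ε * v t - (h t) ^ 2 + γ ^ 2 * ω t)
    (hω' : ∀ t ∈ Set.Icc a b,
      ω' t ≤ 2 * Real.sqrt (ω t) * (L * Real.sqrt (ω t) + h t))
    (hp' : ∀ t ∈ Set.Icc a b, p' t = -2 * Λ * p t - γ * (p t ^ 2 + 1)) :
    ∀ t ∈ Set.Icc a b,
      v t + γ * p t * ω t ≤
        Real.exp (max (-ε) (2 * (L - Λ)) * (t - a)) * (v a + γ * p a * ω a) :=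
  stmt_4_general ε L Λ γ a b hγ v ω p h v' ω' p' hvderiv hωderiv hpderiv hvnn hωnn hppos hv' hω' hp'
end

section
/- Let λ ∈ (0,1), γ > 0, Λ > 0, and set r := √|((γ/Λ)² − 1)|. Define T̃_max(λ,γ,Λ) := (1/(Λr))·arctan( r(1−λ) / ( (2λ/(1+λ))·(γ/Λ − 1) + 1 + λ ) ) if γ > Λ; (1/Λ)·(1−λ)/(1+λ) if γ = Λ; and (1/(Λr))·artanh( r(1−λ) / ( (2λ/(1+λ))·(γ/Λ − 1) + 1 + λ ) ) if γ < Λ. Let φ : ℝ → ℝ be differentiable on [0, T̃_max(λ,γ,Λ)] with φ(0) = 1/λ and φ'(τ) = −2Λ·φ(τ) − γ·(φ(τ)² + 1) for all τ in this interval. Then λ ≤ φ(τ) ≤ 1/λ for all τ ∈ [0, T̃_max(λ,γ,Λ)]. -/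
open Real

/-- The inverse hyperbolic tangent, artanh x = ½·log((1+x)/(1−x)). -/
noncomputable def artanh (x : ℝ) : ℝ := (1 / 2) * Real.log ((1 + x) / (1 - x))

/-- The time bound T̃_max(λ,γ,Λ) from the proof of Proposition 2. -/
noncomputable def Ttilde (lam γ Λ : ℝ) : ℝ :=
  let r : ℝ := Real.sqrt |(γ / Λ) ^ 2 - 1|
  if γ > Λ then
    (1 / (Λ * r)) *
      Real.arctan (r * (1 - lam) / ((2 * lam / (1 + lam)) * (γ / Λ - 1) + 1 + lam))
  else if γ = Λ then
    (1 / Λ) * ((1 - lam) / (1 + lam))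
  else
    (1 / (Λ * r)) *
      _root_.artanh (r * (1 - lam) / ((2 * lam / (1 + lam)) * (γ / Λ - 1) + 1 + lam))

/-!
Separation of variables. The right-hand side is `-Q φ` with `Q x = γ x² + 2Λ x + γ`, which is
positive for `x > 0`. If `G` is a primitive of `1 / Q`, then `τ ↦ G (φ τ) + τ` is constant as
long as `φ` stays positive, so `φ` decreases and needs the time
`G (1/λ) - G λ = ∫_λ^{1/λ} dx / Q x` to go from `1/λ` down to `λ`. That integral is exactly
`T̃_max`; it is an arctangent, a rational function or an artanh according to the sign of the
discriminant `Λ² - γ²` of `Q`.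
-/

open Set

theorem exists_first_eq_of_continuousOn {f : ℝ → ℝ} {a b c : ℝ} (hab : a ≤ b)
    (hf : ContinuousOn f (Icc a b)) (ha : c ≤ f a) (hb : f b < c) :
    ∃ s ∈ Ico a b, f s = c ∧ ∀ σ ∈ Ico a s, c < f σ := by
  set S := Icc a b ∩ f ⁻¹' Iic c
  have hSbdd : BddBelow S := ⟨a, fun x hx => hx.1.1⟩
  obtain ⟨⟨has, hsb⟩, hfs⟩ : sInf S ∈ S :=
    (hf.preimage_isClosed_of_isClosed isClosed_Icc isClosed_Iic).csInf_mem
      ⟨b, ⟨hab, le_rfl⟩, hb.le⟩ hSbdd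
  have hbefore : ∀ σ ∈ Ico a (sInf S), c < f σ := fun σ hσ =>
    not_le.1 fun h => hσ.2.not_ge (csInf_le hSbdd ⟨⟨hσ.1, hσ.2.le.trans hsb⟩, h⟩)
  obtain ⟨σ, hσ, hfσ⟩ :=
    intermediate_value_Icc' has (hf.mono (Icc_subset_Icc_right hsb)) ⟨hfs, ha⟩
  obtain rfl : σ = sInf S :=
    le_antisymm hσ.2 (csInf_le hSbdd ⟨⟨hσ.1, hσ.2.trans hsb⟩, hfσ.le⟩)
  exact ⟨_, ⟨has, hsb.lt_of_ne fun h => hb.ne (h ▸ hfσ)⟩, hfσ, hbefore⟩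

section AutonomousFlow

variable {Q G φ : ℝ → ℝ} {a b T : ℝ}

theorem comp_add_eq_of_hasDerivWithinAt_eq_neg (hG : ∀ x, a ≤ x → HasDerivAt G (Q x)⁻¹ x)
    (hQ : ∀ x, a ≤ x → Q x ≠ 0)
    (hφ : ∀ τ ∈ Icc 0 T, HasDerivWithinAt φ (-Q (φ τ)) (Icc 0 T) τ)
    {t : ℝ} (htT : t ≤ T) (ha : ∀ τ ∈ Icc 0 t, a ≤ φ τ) :
    ∀ τ ∈ Icc 0 t, G (φ τ) + τ = G (φ 0) := by
  have hcont : ContinuousOn (fun τ => G (φ τ) + τ) (Icc 0 t) := fun τ hτ => by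
    have hφτ :=
      (hφ τ ⟨hτ.1, hτ.2.trans htT⟩).continuousWithinAt.mono (Icc_subset_Icc_right htT)
    exact ((hG _ (ha τ hτ)).continuousAt.comp_continuousWithinAt hφτ).add continuousWithinAt_id
  have hderiv : ∀ τ ∈ Ico 0 t, HasDerivWithinAt (fun τ => G (φ τ) + τ) 0 (Ici τ) τ := by
    intro τ hτ
    have hφτ : HasDerivWithinAt φ (-Q (φ τ)) (Ici τ) τ :=
      (hφ τ ⟨hτ.1, hτ.2.le.trans htT⟩).mono_of_mem_nhdsWithin
        (Icc_mem_nhdsGE_of_mem ⟨hτ.1, hτ.2.trans_le htT⟩)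
    have hτa := ha τ ⟨hτ.1, hτ.2.le⟩
    have hQτ := hQ _ hτa
    exact (((hG _ hτa).comp_hasDerivWithinAt τ hφτ).add (hasDerivWithinAt_id τ _)).congr_deriv
      (by field_simp; ring)
  intro τ hτ
  simpa using constant_of_has_deriv_right_zero hcont hderiv τ hτ

theorem mapsTo_Icc_of_hasDerivWithinAt_eq_neg (hQ : ∀ x, a ≤ x → 0 < Q x)
    (hG : ∀ x, a ≤ x → HasDerivAt G (Q x)⁻¹ x) (hab : a ≤ b) (hT : T ≤ G b - G a)
    (hφ0 : φ 0 = b) (hφ : ∀ τ ∈ Icc 0 T, HasDerivWithinAt φ (-Q (φ τ)) (Icc 0 T) τ) :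
    MapsTo φ (Icc 0 T) (Icc a b) := by
  have hQ₀ : ∀ x, a ≤ x → Q x ≠ 0 := fun x hx => (hQ x hx).ne'
  have hcont : ContinuousOn φ (Icc 0 T) := fun τ hτ => (hφ τ hτ).continuousWithinAt
  -- At the first time `s` with `φ s = a`, conservation gives `s = G b - G a ≥ T`.
  have hlower : ∀ τ ∈ Icc 0 T, a ≤ φ τ := by
    by_contra! ⟨τ₀, hτ₀, hφτ₀⟩
    obtain ⟨s, hs, hφs, hbefore⟩ := exists_first_eq_of_continuousOn hτ₀.1
      (hcont.mono (Icc_subset_Icc_right hτ₀.2)) (hφ0 ▸ hab) hφτ₀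
    have hle : ∀ σ ∈ Icc 0 s, a ≤ φ σ := fun σ hσ =>
      hσ.2.eq_or_lt.elim (fun h => (h ▸ hφs).ge) fun h => (hbefore σ ⟨hσ.1, h⟩).le
    have := comp_add_eq_of_hasDerivWithinAt_eq_neg hG hQ₀ hφ (hs.2.le.trans hτ₀.2) hle s
      ⟨hs.1, le_rfl⟩
    rw [hφs, hφ0] at this
    linarith [hs.2, hτ₀.2]
  have hGmono : StrictMonoOn G (Ici a) :=
    strictMonoOn_of_deriv_pos (convex_Ici a)
      (fun x hx => (hG x hx).continuousAt.continuousWithinAt) fun x hx => by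
        rw [interior_Ici] at hx
        rw [(hG x hx.le).deriv]
        exact inv_pos.2 (hQ x hx.le)
  refine fun τ hτ => ⟨hlower τ hτ, (hGmono.le_iff_le (hlower τ hτ) hab).1 ?_⟩
  have := comp_add_eq_of_hasDerivWithinAt_eq_neg hG hQ₀ hφ le_rfl hlower τ hτ
  rw [hφ0] at this
  linarith [hτ.1]

end AutonomousFlow

theorem arctan_sub_arctan {x y : ℝ} (h : -1 < x * y) :
    arctan x - arctan y = arctan ((x - y) / (1 + x * y)) := by
  rw [sub_eq_add_neg, ← arctan_neg, arctan_add (by linarith [mul_neg x y])]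
  congr 2
  ring

theorem hasDerivAt_artanh {x : ℝ} (hx : x ∈ Ioo (-1) 1) :
    HasDerivAt _root_.artanh (1 - x ^ 2)⁻¹ x := by
  obtain ⟨h₁, h₂⟩ := hx
  have hp : 0 < 1 + x := by linarith
  have hm : 0 < 1 - x := by linarith
  have hq : HasDerivAt (fun y => (1 + y) / (1 - y)) (2 / (1 - x) ^ 2) x :=
    (((hasDerivAt_id' x).const_add 1).div ((hasDerivAt_id' x).const_sub 1) hm.ne').congr_deriv
      (by ring)
  refine ((hq.log (div_pos hp hm).ne').const_mul (1 / 2)).congr_deriv ?_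
  have : 1 - x ^ 2 ≠ 0 := by nlinarith
  field_simp
  ring

theorem artanh_sub_artanh {x y : ℝ} (hx : x ∈ Ioo (-1) 1) (hy : y ∈ Ioo (-1) 1) :
    _root_.artanh x - _root_.artanh y = _root_.artanh ((x - y) / (1 - x * y)) := by
  obtain ⟨hx₁, hx₂⟩ := hx
  obtain ⟨hy₁, hy₂⟩ := hy
  have hxy : 0 < 1 - x * y := by nlinarith
  have hnum : 1 + (x - y) / (1 - x * y) = (1 + x) * (1 - y) / (1 - x * y) := by
    field_simp
    ring
  have hden : 1 - (x - y) / (1 - x * y) = (1 - x) * (1 + y) / (1 - x * y) := by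
    field_simp
    ring
  have hx₀ : 0 < (1 + x) / (1 - x) := div_pos (by linarith) (by linarith)
  have hy₀ : 0 < (1 + y) / (1 - y) := div_pos (by linarith) (by linarith)
  rw [_root_.artanh, _root_.artanh, _root_.artanh, ← mul_sub, ← log_div hx₀.ne' hy₀.ne',
    hnum, hden, div_div_div_cancel_right₀ hxy.ne', div_div_div_eq]

section Riccati

variable {lam γ Λ : ℝ}

theorem exists_antideriv_of_lt (hlam : 0 < lam) (hΛ : 0 < Λ) (hΛγ : Λ < γ) :
    ∃ G : ℝ → ℝ, (∀ x, 0 < x → HasDerivAt G (γ * x ^ 2 + 2 * Λ * x + γ)⁻¹ x) ∧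
      G (1 / lam) - G lam = Ttilde lam γ Λ := by
  obtain ⟨c, rfl⟩ : ∃ c, γ = c * Λ := ⟨γ / Λ, by field_simp⟩
  have hc : 1 < c := by nlinarith
  set r := √(c ^ 2 - 1)
  have hr : 0 < r := sqrt_pos.2 (by nlinarith)
  have hr2 : r ^ 2 = c ^ 2 - 1 := sq_sqrt (by nlinarith)
  -- `c Λ x² + 2 Λ x + c Λ = Λ ((c x + 1)² + r²) / c`
  refine ⟨fun x => arctan ((c * x + 1) / r) / (Λ * r), fun x _ => ?_, ?_⟩
  · refine ((((hasDerivAt_id' x).const_mul c).add_const 1).div_const r).arctan.div_const (Λ * r)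
      |>.congr_deriv ?_
    field_simp
    linear_combination -hr2
  · have hT : Ttilde lam (c * Λ) Λ = 1 / (Λ * r) *
        arctan (r * (1 - lam) / (2 * lam / (1 + lam) * (c - 1) + 1 + lam)) := by
      simp only [Ttilde, mul_div_cancel_right₀ c hΛ.ne',
        abs_of_pos (by nlinarith : 0 < c ^ 2 - 1), if_pos hΛγ, r]
    rw [hT, ← sub_div, arctan_sub_arctan (neg_one_lt_zero.trans (by positivity)),
      one_div_mul_eq_div]
    congr 2
    rw [div_eq_div_iff (by positivity) (by positivity)]
    field_simp
    linear_combination (lam ^ 3 - lam) * hr2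

theorem exists_antideriv_of_eq (hlam : 0 < lam) (hΛ : 0 < Λ) :
    ∃ G : ℝ → ℝ, (∀ x, 0 < x → HasDerivAt G (Λ * x ^ 2 + 2 * Λ * x + Λ)⁻¹ x) ∧
      G (1 / lam) - G lam = Ttilde lam Λ Λ := by
  refine ⟨fun x => -(Λ * (x + 1))⁻¹, fun x hx => ?_, ?_⟩
  · refine (((hasDerivAt_id' x).add_const 1).const_mul Λ).inv (by positivity) |>.neg
      |>.congr_deriv ?_
    field_simp
    ring
  · simp only [Ttilde, lt_irrefl, if_false, if_true]
    field_simp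
    ring

theorem exists_antideriv_of_gt (hlam : 0 < lam) (hγ : 0 < γ) (hγΛ : γ < Λ) :
    ∃ G : ℝ → ℝ, (∀ x, 0 < x → HasDerivAt G (γ * x ^ 2 + 2 * Λ * x + γ)⁻¹ x) ∧
      G (1 / lam) - G lam = Ttilde lam γ Λ := by
  have hΛ : 0 < Λ := hγ.trans hγΛ
  obtain ⟨c, rfl⟩ : ∃ c, γ = c * Λ := ⟨γ / Λ, by field_simp⟩
  have hc0 : 0 < c := pos_of_mul_pos_left hγ hΛ.le
  have hc1 : c < 1 := by nlinarith
  set r := √(1 - c ^ 2)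
  have hr : 0 < r := sqrt_pos.2 (by nlinarith)
  have hr2 : r ^ 2 = 1 - c ^ 2 := sq_sqrt (by nlinarith)
  have hr1 : r < 1 := by nlinarith
  have hmem : ∀ x, 0 < x → r / (c * x + 1) ∈ Ioo (-1) 1 := fun x hx =>
    ⟨by linarith [div_pos hr (by positivity : 0 < c * x + 1)],
      (div_lt_one (by positivity)).2 (by nlinarith)⟩
  -- `c Λ x² + 2 Λ x + c Λ = Λ ((c x + 1)² - r²) / c`
  refine ⟨fun x => -(_root_.artanh (r / (c * x + 1)) / (Λ * r)), fun x hx => ?_, ?_⟩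
  · have hinv := (((hasDerivAt_id' x).const_mul c).add_const 1).inv (by positivity) |>.const_mul r
    refine ((hasDerivAt_artanh (hmem x hx)).comp x hinv).div_const (Λ * r) |>.neg
      |>.congr_deriv ?_
    have hsq : 1 - (r / (c * x + 1)) ^ 2 = c * (c * x ^ 2 + 2 * x + c) / (c * x + 1) ^ 2 := by
      field_simp
      linear_combination -hr2
    rw [hsq]
    field_simp
  · have hT : Ttilde lam (c * Λ) Λ = 1 / (Λ * r) *
        _root_.artanh (r * (1 - lam) / (2 * lam / (1 + lam) * (c - 1) + 1 + lam)) := by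
      simp only [Ttilde, mul_div_cancel_right₀ c hΛ.ne',
        abs_of_neg (by nlinarith : c ^ 2 - 1 < 0), if_neg (not_lt.2 hγΛ.le), if_neg hγΛ.ne, r,
        neg_sub]
    rw [hT, neg_sub_neg, ← sub_div, artanh_sub_artanh (hmem lam hlam) (hmem _ (by positivity)),
      one_div_mul_eq_div]
    congr 2
    have hD : 0 < 2 * lam / (1 + lam) * (c - 1) + 1 + lam := by
      calc (0 : ℝ) < (2 * c * lam + 1 + lam ^ 2) / (1 + lam) := by positivity
        _ = _ := by field_simp; ring
    have huv : r / (c * lam + 1) * (r / (c * (1 / lam) + 1)) < 1 :=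
      mul_lt_one_of_nonneg_of_lt_one_left (by positivity) (hmem lam hlam).2
        (hmem _ (by positivity)).2.le
    rw [div_eq_div_iff (by linarith) hD.ne']
    field_simp
    linear_combination (lam - lam ^ 3) * hr2

theorem exists_antideriv_riccati (hlam : 0 < lam) (hγ : 0 < γ) (hΛ : 0 < Λ) :
    ∃ G : ℝ → ℝ, (∀ x, 0 < x → HasDerivAt G (γ * x ^ 2 + 2 * Λ * x + γ)⁻¹ x) ∧
      G (1 / lam) - G lam = Ttilde lam γ Λ := by
  rcases lt_trichotomy Λ γ with h | rfl | h
  · exact exists_antideriv_of_lt hlam hΛ h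
  · exact exists_antideriv_of_eq hlam hΛ
  · exact exists_antideriv_of_gt hlam hγ h

end Riccati

/-- The Riccati comparison fact: the solution of φ' = −2Λφ − γ(φ²+1) started at 1/λ
stays in [λ, 1/λ] up to time T̃_max(λ,γ,Λ). -/
theorem stmt_6 (lam γ Λ : ℝ) (hlam : lam ∈ Set.Ioo (0 : ℝ) 1)
    (hγ : 0 < γ) (hΛ : 0 < Λ)
    (φ : ℝ → ℝ) (hφ0 : φ 0 = 1 / lam)
    (hφderiv : ∀ τ ∈ Set.Icc (0 : ℝ) (Ttilde lam γ Λ),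
      HasDerivWithinAt φ (-2 * Λ * φ τ - γ * (φ τ ^ 2 + 1))
        (Set.Icc (0 : ℝ) (Ttilde lam γ Λ)) τ) :
    ∀ τ ∈ Set.Icc (0 : ℝ) (Ttilde lam γ Λ), lam ≤ φ τ ∧ φ τ ≤ 1 / lam := by
  obtain ⟨hlam₀, hlam₁⟩ := hlam
  obtain ⟨G, hG, hGT⟩ := exists_antideriv_riccati hlam₀ hγ hΛ
  have hlam_le : lam ≤ 1 / lam := by
    rw [le_div_iff₀ hlam₀]
    nlinarith
  have hQ : ∀ x, lam ≤ x → 0 < γ * x ^ 2 + 2 * Λ * x + γ := fun x hx => by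
    have := hlam₀.trans_le hx
    positivity
  exact mapsTo_Icc_of_hasDerivWithinAt_eq_neg hQ (fun x hx => hG x (hlam₀.trans_le hx)) hlam_le
    hGT.ge hφ0 fun τ hτ => (hφderiv τ hτ).congr_deriv (by ring)
end

section
/- Let γ > 0 and Λ > 0, set r := √|((γ/Λ)² − 1)|, and define T_max(γ,Λ) := arctan(r)/(Λr) if γ > Λ, 1/Λ if γ = Λ, and artanh(r)/(Λr) if γ < Λ. With T̃_max(λ,γ,Λ) := (1/(Λr))·arctan( r(1−λ) / ( (2λ/(1+λ))·(γ/Λ − 1) + 1 + λ ) ) if γ > Λ, (1/Λ)·(1−λ)/(1+λ) if γ = Λ, and (1/(Λr))·artanh( r(1−λ) / ( (2λ/(1+λ))·(γ/Λ − 1) + 1 + λ ) ) if γ < Λ, the following holds: for every real T with 0 < T < T_max(γ,Λ) there exists λ ∈ (0,1) such that T̃_max(λ,γ,Λ) = T. -/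
open Real

/-- The maximum allowable sampling period bound T_max(γ,Λ). -/
noncomputable def Tmax (γ Λ : ℝ) : ℝ :=
  let r : ℝ := Real.sqrt |(γ / Λ) ^ 2 - 1|
  if γ > Λ then Real.arctan r / (Λ * r)
  else if γ = Λ then 1 / Λ
  else _root_.artanh r / (Λ * r)

/-!
Write `c = γ / Λ` and `r = √|c² - 1|`. Since `1 + λ > 0`, the denominator in `T̃_max` equals
`(1 + λ² + 2λc) / (1 + λ)`, which is positive for `λ ≥ 0` and `c ≥ 0`; hence the argument
`u(λ) = r (1 - λ)(1 + λ) / (1 + λ² + 2λc)` of arctan/artanh is continuous on `[0, 1]`, runs from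
`u(0) = r` to `u(1) = 0` and stays in `[0, r]`. When `γ < Λ` we have `r < 1`, so artanh is continuous
along `u`. Thus `λ ↦ T̃_max(λ, γ, Λ)` is continuous on `[0, 1]`, equals `T_max(γ, Λ)` at `λ = 0` and
`0` at `λ = 1`, and the intermediate value theorem gives the claim.
-/

open Set

namespace SamplingPeriod

/-- The common argument of arctan and artanh in `Ttilde`, with `c = γ / Λ`. -/
noncomputable def arg (r c lam : ℝ) : ℝ :=
  r * (1 - lam) / ((2 * lam / (1 + lam)) * (c - 1) + 1 + lam)

lemma denom_eq {c lam : ℝ} (h : 1 + lam ≠ 0) :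
    2 * lam / (1 + lam) * (c - 1) + 1 + lam = (1 + lam ^ 2 + 2 * lam * c) / (1 + lam) := by
  field_simp
  ring

lemma denom_pos {c lam : ℝ} (hc : 0 ≤ c) (hlam : 0 ≤ lam) :
    0 < 2 * lam / (1 + lam) * (c - 1) + 1 + lam := by
  have h1 : 0 < 1 + lam := by linarith
  rw [denom_eq h1.ne']
  exact div_pos (by positivity) h1

lemma continuousOn_arg (r : ℝ) {c : ℝ} (hc : 0 ≤ c) : ContinuousOn (arg r c) (Ici 0) := by
  refine ContinuousOn.div (by fun_prop) ?_ fun lam hlam => (denom_pos hc hlam).ne'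
  refine ContinuousOn.add (ContinuousOn.add ?_ continuousOn_const) continuousOn_id
  refine ContinuousOn.mul (ContinuousOn.div (by fun_prop) (by fun_prop) ?_) continuousOn_const
  intro lam (hlam : 0 ≤ lam)
  positivity

lemma arg_nonneg {r c lam : ℝ} (hr : 0 ≤ r) (hc : 0 ≤ c) (h0 : 0 ≤ lam) (h1 : lam ≤ 1) :
    0 ≤ arg r c lam :=
  div_nonneg (mul_nonneg hr (by linarith)) (denom_pos hc h0).le

lemma arg_le {r c lam : ℝ} (hr : 0 ≤ r) (hc : 0 ≤ c) (h0 : 0 ≤ lam) : arg r c lam ≤ r := by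
  have h1 : 0 < 1 + lam := by linarith
  have hq : 0 < 1 + lam ^ 2 + 2 * lam * c := by positivity
  rw [arg, denom_eq h1.ne', div_div_eq_mul_div, div_le_iff₀ hq]
  nlinarith [mul_nonneg hr (mul_nonneg h0 hc), mul_nonneg hr (sq_nonneg lam)]

end SamplingPeriod

open SamplingPeriod

lemma continuousOn_artanh : ContinuousOn _root_.artanh (Ioo (-1) 1) := by
  refine continuousOn_const.mul (ContinuousOn.log ?_ fun x hx => ?_)
  · exact ContinuousOn.div (by fun_prop) (by fun_prop) fun x hx => by linarith [hx.2]
  · exact (div_pos (by linarith [hx.1]) (by linarith [hx.2])).ne'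

@[simp] lemma artanh_zero : _root_.artanh 0 = 0 := by simp [_root_.artanh]

lemma Ttilde_zero (γ Λ : ℝ) : Ttilde 0 γ Λ = Tmax γ Λ := by
  simp only [Ttilde, Tmax]
  split_ifs <;> simp [div_eq_inv_mul]

lemma Ttilde_one (γ Λ : ℝ) : Ttilde 1 γ Λ = 0 := by
  simp only [Ttilde]
  split_ifs <;> simp

lemma continuousOn_Ttilde {γ Λ : ℝ} (hγ : 0 < γ) (hΛ : 0 < Λ) :
    ContinuousOn (fun lam => Ttilde lam γ Λ) (Icc 0 1) := by
  set c := γ / Λ with hc_def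
  set r := √|c ^ 2 - 1|
  have hc : 0 < c := by positivity
  have harg : ContinuousOn (arg r c) (Icc 0 1) :=
    (continuousOn_arg r hc.le).mono Icc_subset_Ici_self
  simp only [Ttilde, ← hc_def]
  rcases lt_trichotomy Λ γ with hlt | rfl | hgt
  · simp only [gt_iff_lt, if_pos hlt]
    exact continuousOn_const.mul (continuous_arctan.comp_continuousOn harg)
  · simp only [lt_irrefl, if_false, if_true]
    exact continuousOn_const.mul (ContinuousOn.div (by fun_prop) (by fun_prop)
      fun lam hlam => by linarith [hlam.1])
  · simp only [gt_iff_lt, if_neg (not_lt.2 hgt.le), if_neg hgt.ne]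
    have hr : r < 1 := by
      have hc1 : c < 1 := (div_lt_one hΛ).2 hgt
      rw [Real.sqrt_lt' one_pos, abs_of_neg (by nlinarith)]
      nlinarith
    refine continuousOn_const.mul (continuousOn_artanh.comp harg fun lam hlam => ?_)
    have hr0 : 0 ≤ r := Real.sqrt_nonneg _
    exact ⟨(by linarith [arg_nonneg hr0 hc.le hlam.1 hlam.2] : -1 < arg r c lam),
      (arg_le hr0 hc.le hlam.1).trans_lt hr⟩

/-- For any T with 0 < T < T_max(γ,Λ) there is λ ∈ (0,1) with T̃_max(λ,γ,Λ) = T. -/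
theorem stmt_7 (γ Λ : ℝ) (hγ : 0 < γ) (hΛ : 0 < Λ) :
    ∀ T : ℝ, 0 < T → T < Tmax γ Λ →
      ∃ lam : ℝ, lam ∈ Set.Ioo (0 : ℝ) 1 ∧ Ttilde lam γ Λ = T := by
  intro T hT hTmax
  refine intermediate_value_Ioo' zero_le_one (continuousOn_Ttilde hγ hΛ) ?_
  rw [Ttilde_zero, Ttilde_one]
  exact ⟨hT, hTmax⟩
end

section
/- Let Λ > 0. For γ > 0 set r(γ) := √|((γ/Λ)² − 1)| and define T_max(γ,Λ) := arctan(r(γ))/(Λ·r(γ)) if γ > Λ, 1/Λ if γ = Λ, and artanh(r(γ))/(Λ·r(γ)) if γ < Λ. Then γ ↦ T_max(γ,Λ) is antitone on (0,∞): for all 0 < γ₁ ≤ γ₂ one has T_max(γ₂,Λ) ≤ T_max(γ₁,Λ). -/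
open Real

/-!
All three branches of `Tmax γ Λ` are `Λ⁻¹ ∫₀¹ dt / (1 + c t²)` with `c = (γ/Λ)² - 1`:
substituting `u = r t` with `r = √|c|` turns the integral into `arctan r / r` for `c > 0`
and `artanh r / r` for `c < 0`. For `c > -1` the integrand is positive and pointwise
antitone in `c`, hence so is the integral, and `c` is increasing in `γ > 0`.
-/

theorem hasDerivAt_artanh_s8 {x : ℝ} (h₁ : -1 < x) (h₂ : x < 1) :
    HasDerivAt _root_.artanh (1 / (1 - x ^ 2)) x := by
  have hsub : (1 : ℝ) - x ≠ 0 := by linarith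
  have hadd : (1 : ℝ) + x ≠ 0 := by linarith
  have hquot : HasDerivAt (fun y => (1 + y) / (1 - y)) (2 / (1 - x) ^ 2) x :=
    (((hasDerivAt_id' x).const_add 1).div ((hasDerivAt_id' x).const_sub 1) hsub).congr_deriv
      (by ring)
  refine ((hquot.log (div_ne_zero hadd hsub)).const_mul (1 / 2 : ℝ)).congr_deriv ?_
  rw [show (1 : ℝ) - x ^ 2 = (1 - x) * (1 + x) by ring]
  field_simp

theorem integral_one_div_one_sub_sq {r : ℝ} (h₁ : -1 < r) (h₂ : r < 1) :
    ∫ u in (0 : ℝ)..r, 1 / (1 - u ^ 2) = _root_.artanh r := by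
  have hmem : ∀ u ∈ Set.uIcc 0 r, -1 < u ∧ u < 1 := by
    intro u hu
    rcases Set.mem_uIcc.1 hu with h | h <;> constructor <;> linarith [h.1, h.2]
  rw [intervalIntegral.integral_eq_sub_of_hasDerivAt
    (fun u hu => hasDerivAt_artanh_s8 (hmem u hu).1 (hmem u hu).2)]
  · simp [_root_.artanh]
  · refine ContinuousOn.intervalIntegrable (continuousOn_const.div (by fun_prop) ?_)
    intro u hu
    nlinarith [hmem u hu]

theorem integral_one_div_one_sub_sq_mul_sq {r : ℝ} (hr : r ≠ 0) (h₁ : -1 < r) (h₂ : r < 1) :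
    ∫ t in (0 : ℝ)..1, 1 / (1 - r ^ 2 * t ^ 2) = _root_.artanh r / r := by
  calc ∫ t in (0 : ℝ)..1, 1 / (1 - r ^ 2 * t ^ 2)
      = ∫ t in (0 : ℝ)..1, (fun u => 1 / (1 - u ^ 2)) (t * r) := by
        simp only [mul_pow, mul_comm]
    _ = r⁻¹ • ∫ u in 0 * r..1 * r, 1 / (1 - u ^ 2) :=
      intervalIntegral.integral_comp_mul_right (fun u => 1 / (1 - u ^ 2)) hr
    _ = _root_.artanh r / r := by
      rw [zero_mul, one_mul, integral_one_div_one_sub_sq h₁ h₂, smul_eq_mul, inv_mul_eq_div]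

theorem integral_one_div_one_add_sq_mul_sq {r : ℝ} (hr : r ≠ 0) :
    ∫ t in (0 : ℝ)..1, 1 / (1 + r ^ 2 * t ^ 2) = arctan r / r := by
  calc ∫ t in (0 : ℝ)..1, 1 / (1 + r ^ 2 * t ^ 2)
      = ∫ t in (0 : ℝ)..1, (fun u => 1 / (1 + u ^ 2)) (t * r) := by
        simp only [mul_pow, mul_comm]
    _ = r⁻¹ • ∫ u in 0 * r..1 * r, 1 / (1 + u ^ 2) :=
      intervalIntegral.integral_comp_mul_right (fun u => 1 / (1 + u ^ 2)) hr
    _ = arctan r / r := by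
      rw [zero_mul, one_mul, integral_one_div_one_add_sq, arctan_zero, sub_zero, smul_eq_mul,
        inv_mul_eq_div]

theorem one_add_mul_sq_pos {c t : ℝ} (hc : -1 < c) (ht : t ^ 2 ≤ 1) : 0 < 1 + c * t ^ 2 := by
  rcases le_or_gt 0 c with h | h
  · positivity
  · nlinarith

theorem antitoneOn_integral_one_div_one_add_mul_sq :
    AntitoneOn (fun c : ℝ => ∫ t in (0 : ℝ)..1, 1 / (1 + c * t ^ 2)) (Set.Ioi (-1)) := by
  have hpos : ∀ c ∈ Set.Ioi (-1 : ℝ), ∀ t ∈ Set.Icc (0 : ℝ) 1, 0 < 1 + c * t ^ 2 :=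
    fun c hc t ht => one_add_mul_sq_pos hc (pow_le_one₀ ht.1 ht.2)
  have hint : ∀ c ∈ Set.Ioi (-1 : ℝ),
      IntervalIntegrable (fun t => 1 / (1 + c * t ^ 2)) MeasureTheory.volume 0 1 := by
    intro c hc
    refine ContinuousOn.intervalIntegrable (continuousOn_const.div (by fun_prop) ?_)
    rw [Set.uIcc_of_le zero_le_one]
    exact fun t ht => (hpos c hc t ht).ne'
  intro c₁ hc₁ c₂ hc₂ hle
  refine intervalIntegral.integral_mono_on zero_le_one (hint c₂ hc₂) (hint c₁ hc₁) ?_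
  intro t ht
  have hpos₁ := hpos c₁ hc₁ t ht
  gcongr

theorem Tmax_eq_integral {γ Λ : ℝ} (hγ : 0 < γ) (hΛ : 0 < Λ) :
    Tmax γ Λ = Λ⁻¹ * ∫ t in (0 : ℝ)..1, 1 / (1 + ((γ / Λ) ^ 2 - 1) * t ^ 2) := by
  rcases lt_trichotomy γ Λ with h | rfl | h
  · have hc : (γ / Λ) ^ 2 - 1 < 0 := by
      have : γ / Λ < 1 := (div_lt_one hΛ).2 h
      nlinarith [div_pos hγ hΛ]
    set r := √|(γ / Λ) ^ 2 - 1| with hr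
    have hr_sq : r ^ 2 = -((γ / Λ) ^ 2 - 1) := by
      rw [hr, sq_sqrt (abs_nonneg _), abs_of_neg hc]
    have hr_pos : 0 < r := sqrt_pos.2 (abs_pos.2 hc.ne)
    have hr_lt : r < 1 := by nlinarith [div_pos hγ hΛ]
    simp only [show (γ / Λ) ^ 2 - 1 = -r ^ 2 by linarith, neg_mul, ← sub_eq_add_neg]
    rw [integral_one_div_one_sub_sq_mul_sq hr_pos.ne' (by linarith) hr_lt]
    simp only [Tmax, if_neg h.not_gt, if_neg h.ne, ← hr]
    field_simp
  · simp [Tmax, hΛ.ne']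
  · have hc : 0 < (γ / Λ) ^ 2 - 1 := by
      have : 1 < γ / Λ := (one_lt_div hΛ).2 h
      nlinarith
    set r := √|(γ / Λ) ^ 2 - 1| with hr
    have hr_sq : r ^ 2 = (γ / Λ) ^ 2 - 1 := by
      rw [hr, sq_sqrt (abs_nonneg _), abs_of_pos hc]
    have hr_pos : 0 < r := sqrt_pos.2 (abs_pos.2 hc.ne')
    rw [← hr_sq, integral_one_div_one_add_sq_mul_sq hr_pos.ne']
    simp only [Tmax, if_pos h, ← hr]
    field_simp

/-- For fixed Λ > 0, the bound T_max(γ,Λ) is antitone in γ on (0,∞). -/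
theorem stmt_8 (Λ : ℝ) (hΛ : 0 < Λ) :
    ∀ γ₁ γ₂ : ℝ, 0 < γ₁ → γ₁ ≤ γ₂ → Tmax γ₂ Λ ≤ Tmax γ₁ Λ := by
  intro γ₁ γ₂ hγ₁ hγ₁₂
  have hγ₂ : 0 < γ₂ := hγ₁.trans_le hγ₁₂
  have hc : ∀ γ, 0 < γ → (γ / Λ) ^ 2 - 1 ∈ Set.Ioi (-1) := fun γ hγ => by
    simpa using pow_pos (div_pos hγ hΛ) 2
  rw [Tmax_eq_integral hγ₁ hΛ, Tmax_eq_integral hγ₂ hΛ]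
  refine mul_le_mul_of_nonneg_left ?_ (by positivity)
  refine antitoneOn_integral_one_div_one_add_mul_sq (hc γ₁ hγ₁) (hc γ₂ hγ₂) ?_
  gcongr
end

section
/- Let γ > 0. For Λ > 0 set r(Λ) := √|((γ/Λ)² − 1)| and define T_max(γ,Λ) := arctan(r(Λ))/(Λ·r(Λ)) if γ > Λ, 1/Λ if γ = Λ, and artanh(r(Λ))/(Λ·r(Λ)) if γ < Λ. Then Λ ↦ T_max(γ,Λ) is antitone on (0,∞): for all 0 < Λ₁ ≤ Λ₂ one has T_max(γ,Λ₂) ≤ T_max(γ,Λ₁). -/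
/-!
With c = Λ/γ one has T_max(γ,Λ) = γ⁻¹ ∫₀^∞ dx / (x² + 2cx + 1): according to the sign of
the discriminant c² - 1 the integrand has an arctan, a rational or a logarithmic (artanh)
antiderivative, and each evaluates to the corresponding branch of T_max. Since the integrand is
pointwise decreasing in c, T_max is antitone in Λ.
-/

open Real

open MeasureTheory Set Filter Topology

lemma quadratic_pos_of_nonneg {c x : ℝ} (hc : -1 < c) (hx : 0 ≤ x) :
    0 < x ^ 2 + 2 * c * x + 1 := by
  nlinarith [sq_nonneg (x - 1), mul_nonneg (by linarith : 0 ≤ c + 1) hx]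

lemma integrableOn_inv_quadratic {c : ℝ} (hc : 0 ≤ c) :
    IntegrableOn (fun x : ℝ => (x ^ 2 + 2 * c * x + 1)⁻¹) (Ioi 0) := by
  refine integrable_inv_one_add_sq.integrableOn.mono' (by fun_prop) ?_
  refine ae_restrict_of_forall_mem measurableSet_Ioi fun x (hx : 0 < x) => ?_
  have hpos := quadratic_pos_of_nonneg (c := c) (by linarith) hx.le
  rw [Real.norm_of_nonneg (inv_nonneg.2 hpos.le)]
  exact inv_anti₀ (by positivity) (by nlinarith)

lemma integral_Ioi_inv_quadratic_of_hasDerivAt {c L : ℝ} {g : ℝ → ℝ} (hc : -1 < c)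
    (hg : ∀ x ∈ Ici (0 : ℝ), HasDerivAt g (x ^ 2 + 2 * c * x + 1)⁻¹ x)
    (hlim : Tendsto g atTop (𝓝 L)) :
    ∫ x in Ioi 0, (x ^ 2 + 2 * c * x + 1)⁻¹ = L - g 0 :=
  integral_Ioi_of_hasDerivAt_of_nonneg' hg
    (fun x (hx : 0 < x) => (inv_pos.2 (quadratic_pos_of_nonneg hc hx.le)).le) hlim

lemma integral_Ioi_inv_quadratic_of_lt_one {c : ℝ} (hc₀ : 0 < c) (hc₁ : c < 1) :
    ∫ x in Ioi 0, (x ^ 2 + 2 * c * x + 1)⁻¹ =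
      arctan (√(1 - c ^ 2) / c) / √(1 - c ^ 2) := by
  set s := √(1 - c ^ 2)
  have hs : 0 < s := Real.sqrt_pos.2 (by nlinarith)
  have hs2 : s ^ 2 = 1 - c ^ 2 := Real.sq_sqrt (by nlinarith)
  have hderiv : ∀ x ∈ Ici (0 : ℝ),
      HasDerivAt (fun x => arctan ((x + c) / s) / s) (x ^ 2 + 2 * c * x + 1)⁻¹ x := by
    intro x (hx : 0 ≤ x)
    have hq := (quadratic_pos_of_nonneg (c := c) (by linarith) hx).ne'
    refine ((((hasDerivAt_id' x).add_const c).div_const s).arctan.div_const s).congr_deriv ?_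
    field_simp
    linear_combination -hs2
  have hlim : Tendsto (fun x => arctan ((x + c) / s) / s) atTop (𝓝 (π / 2 / s)) :=
    ((tendsto_arctan_atTop.mono_right nhdsWithin_le_nhds).comp
      ((tendsto_atTop_add_const_right _ c tendsto_id).atTop_div_const hs)).div_const s
  have harctan : arctan (c / s) = π / 2 - arctan (s / c) := by
    rw [← arctan_inv_of_pos (by positivity), inv_div]
  rw [integral_Ioi_inv_quadratic_of_hasDerivAt (by linarith) hderiv hlim, zero_add, harctan]
  ring

lemma integral_Ioi_inv_quadratic_one :
    ∫ x in Ioi (0 : ℝ), (x ^ 2 + 2 * 1 * x + 1)⁻¹ = 1 := by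
  have hderiv : ∀ x ∈ Ici (0 : ℝ),
      HasDerivAt (fun x => -(x + 1)⁻¹) (x ^ 2 + 2 * 1 * x + 1)⁻¹ x := by
    intro x (hx : 0 ≤ x)
    refine (((hasDerivAt_id' x).add_const 1).fun_inv (by positivity)).fun_neg.congr_deriv ?_
    field_simp
    ring
  have hlim : Tendsto (fun x : ℝ => -(x + 1)⁻¹) atTop (𝓝 (-0)) :=
    (tendsto_inv_atTop_zero.comp (tendsto_atTop_add_const_right _ 1 tendsto_id)).neg
  rw [integral_Ioi_inv_quadratic_of_hasDerivAt (by norm_num) hderiv hlim]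
  norm_num

lemma integral_Ioi_inv_quadratic_of_one_lt {c : ℝ} (hc : 1 < c) :
    ∫ x in Ioi 0, (x ^ 2 + 2 * c * x + 1)⁻¹ =
      _root_.artanh (√(c ^ 2 - 1) / c) / √(c ^ 2 - 1) := by
  set d := √(c ^ 2 - 1)
  have hd : 0 < d := Real.sqrt_pos.2 (by nlinarith)
  have hd2 : d ^ 2 = c ^ 2 - 1 := Real.sq_sqrt (by nlinarith)
  have hdc : d < c := by nlinarith
  set g : ℝ → ℝ := fun x => log ((x + c - d) / (x + c + d)) / (2 * d)
  have hderiv : ∀ x ∈ Ici (0 : ℝ), HasDerivAt g (x ^ 2 + 2 * c * x + 1)⁻¹ x := by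
    intro x (hx : 0 ≤ x)
    have hm : 0 < x + c - d := by linarith
    have hp : 0 < x + c + d := by linarith
    have hq := (quadratic_pos_of_nonneg (c := c) (by linarith) hx).ne'
    refine ((((hasDerivAt_id' x).add_const c).sub_const d).fun_div
      (((hasDerivAt_id' x).add_const c).add_const d) hp.ne' |>.log
      (div_pos hm hp).ne' |>.div_const (2 * d)).congr_deriv ?_
    field_simp
    linear_combination 2 * d * hd2
  have hratio : Tendsto (fun x => (x + c - d) / (x + c + d)) atTop (𝓝 1) := by
    have h : Tendsto (fun x => 1 - 2 * d * (x + c + d)⁻¹) atTop (𝓝 (1 - 2 * d * 0)) :=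
      tendsto_const_nhds.sub <| (tendsto_inv_atTop_zero.comp <| tendsto_atTop_add_const_right _ _ <|
        tendsto_atTop_add_const_right _ _ tendsto_id).const_mul _
    rw [mul_zero, sub_zero] at h
    refine h.congr' <| (eventually_ge_atTop 0).mono fun x (hx : 0 ≤ x) => ?_
    field_simp [show x + c + d ≠ 0 by linarith]
    ring
  have hlim : Tendsto g atTop (𝓝 (log 1 / (2 * d))) :=
    ((continuousAt_log one_ne_zero).tendsto.comp hratio).div_const _
  have hartanh : (1 + d / c) / (1 - d / c) = ((0 + c - d) / (0 + c + d))⁻¹ := by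
    field_simp [show c - d ≠ 0 by linarith]
    ring
  rw [integral_Ioi_inv_quadratic_of_hasDerivAt (by linarith) hderiv hlim, _root_.artanh, hartanh,
    log_inv, log_one]
  ring

lemma sqrt_abs_inv_sq_sub_one {c : ℝ} (hc : 0 < c) :
    √|c⁻¹ ^ 2 - 1| = √|1 - c ^ 2| / c := by
  rw [show c⁻¹ ^ 2 - 1 = (1 - c ^ 2) / c ^ 2 by field_simp, abs_div, abs_sq,
    Real.sqrt_div' _ (sq_nonneg c), Real.sqrt_sq hc.le]

lemma Tmax_eq_inv_mul_integral {γ Λ : ℝ} (hγ : 0 < γ) (hΛ : 0 < Λ) :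
    Tmax γ Λ = γ⁻¹ * ∫ x in Ioi 0, (x ^ 2 + 2 * (Λ / γ) * x + 1)⁻¹ := by
  have hc : 0 < Λ / γ := div_pos hΛ hγ
  have hr : √|(γ / Λ) ^ 2 - 1| = √|1 - (Λ / γ) ^ 2| / (Λ / γ) := by
    rw [← inv_div, sqrt_abs_inv_sq_sub_one hc]
  rcases lt_trichotomy Λ γ with h | rfl | h
  · have hc₁ : Λ / γ < 1 := (div_lt_one hγ).2 h
    have hs : 0 < 1 - (Λ / γ) ^ 2 := by nlinarith
    rw [integral_Ioi_inv_quadratic_of_lt_one hc hc₁, Tmax]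
    simp only [if_pos h, hr, abs_of_pos hs]
    field_simp
  · rw [div_self hΛ.ne', integral_Ioi_inv_quadratic_one, Tmax]
    simp
  · have hc₁ : 1 < Λ / γ := (one_lt_div hγ).2 h
    have hd : 1 - (Λ / γ) ^ 2 < 0 := by nlinarith
    rw [integral_Ioi_inv_quadratic_of_one_lt hc₁, Tmax]
    simp only [if_neg h.not_gt, if_neg h.ne, hr, abs_of_neg hd, neg_sub]
    field_simp

lemma integral_Ioi_inv_quadratic_antitoneOn :
    AntitoneOn (fun c : ℝ => ∫ x in Ioi 0, (x ^ 2 + 2 * c * x + 1)⁻¹) (Ici 0) :=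
  fun c₁ (hc₁ : 0 ≤ c₁) c₂ (hc₂ : 0 ≤ c₂) h =>
    setIntegral_mono_on (integrableOn_inv_quadratic hc₂) (integrableOn_inv_quadratic hc₁)
      measurableSet_Ioi fun x (hx : 0 < x) =>
        inv_anti₀ (quadratic_pos_of_nonneg (by linarith) hx.le) (by nlinarith)

/-- For fixed γ > 0, the bound T_max(γ,Λ) is antitone in Λ on (0,∞). -/
theorem stmt_9 (γ : ℝ) (hγ : 0 < γ) :
    ∀ Λ₁ Λ₂ : ℝ, 0 < Λ₁ → Λ₁ ≤ Λ₂ → Tmax γ Λ₂ ≤ Tmax γ Λ₁ := by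
  intro Λ₁ Λ₂ h₁ h₁₂
  rw [Tmax_eq_inv_mul_integral hγ h₁, Tmax_eq_inv_mul_integral hγ (h₁.trans_le h₁₂)]
  have hc₁ : 0 ≤ Λ₁ / γ := (div_pos h₁ hγ).le
  exact mul_le_mul_of_nonneg_left
    (integral_Ioi_inv_quadratic_antitoneOn hc₁ (hc₁.trans (by gcongr)) (by gcongr))
    (inv_nonneg.2 hγ.le)
end

section
/- Let m, n ∈ ℕ with m ≥ 1 and 1 ≤ n ≤ m, and let ν : ℕ → {0,1} be an infinite binary sequence. Suppose that in every window of m consecutive entries there are at least n ones, i.e., for every k ∈ ℕ, the number of indices i with k ≤ i ≤ k+m−1 and ν_i = 1 is at least n. Then ν contains no run of m−n+1 consecutive zeros: for every k ∈ ℕ there exists an index i with k ≤ i ≤ k+m−n and ν_i = 1. -/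
/-! The leftmost one in the window `[k, k + m)` is followed inside the window by the other
`≥ n - 1` ones, so it lies at offset at most `m - n`. -/

theorem Finset.min'_add_card_le_of_subset_range {s : Finset ℕ} {m : ℕ}
    (hs : s ⊆ Finset.range m) (hne : s.Nonempty) : s.min' hne + s.card ≤ m := by
  have hsub : s ⊆ Finset.Ico (s.min' hne) m := fun i hi =>
    Finset.mem_Ico.2 ⟨s.min'_le i hi, Finset.mem_range.1 (hs hi)⟩
  have hmin : s.min' hne < m := Finset.mem_range.1 (hs (s.min'_mem hne))
  have := Finset.card_le_card hsub
  rw [Nat.card_Ico] at this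
  omega

theorem stmt_10_general (m n : ℕ) (hn1 : 1 ≤ n)
    (ν : ℕ → ℕ)
    (hwin : ∀ k : ℕ, n ≤ ((Finset.range m).filter (fun i => ν (k + i) = 1)).card) :
    ∀ k : ℕ, ∃ i : ℕ, k ≤ i ∧ i ≤ k + (m - n) ∧ ν i = 1 := by
  intro k
  have hcard := hwin k
  set ones := (Finset.range m).filter (fun i => ν (k + i) = 1)
  have hne : ones.Nonempty := Finset.card_pos.1 (by omega)
  have hbound : ones.min' hne + ones.card ≤ m :=
    Finset.min'_add_card_le_of_subset_range (Finset.filter_subset _ _) hne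
  have hone := (Finset.mem_filter.1 (ones.min'_mem hne)).2
  exact ⟨k + ones.min' hne, by omega, by omega, hone⟩

/-- Hardness relation (n/m) ⪯ ⟨̄(m−n+1)⟩: if every window of m consecutive entries of
a binary sequence contains at least n ones, then there is no run of m−n+1 consecutive
zeros. -/
theorem stmt_10 (m n : ℕ) (hm : 1 ≤ m) (hn1 : 1 ≤ n) (hnm : n ≤ m)
    (ν : ℕ → ℕ) (hbin : ∀ i, ν i = 0 ∨ ν i = 1)
    (hwin : ∀ k : ℕ, n ≤ ((Finset.range m).filter (fun i => ν (k + i) = 1)).card) :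
    ∀ k : ℕ, ∃ i : ℕ, k ≤ i ∧ i ≤ k + (m - n) ∧ ν i = 1 :=
  stmt_10_general m n hn1 ν hwin
end
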